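/- arXiv:2203.10639 — 3 statements merged into one kernel-verified Lean document; each statement's English description precedes it below -/
import Mathlib

section
/- Consider the linearized mixed-traffic system with n vehicles and CAV index set S = {i1 < i2 < ... < im} (m ≥ 1). If i1 > 1 (the vehicle immediately behind the head vehicle is a human-driven vehicle), then the pair (A, B) is not controllable, i.e., the controllability matrix [B, AB, A²B, ..., A^{2n−1}B] has rank strictly less than 2n. -/
open Matrix

noncomputable section

/-- 2×2 block for HDV diagonal. -/
def PP1 (α1 α2 : ℝ) : Matrix (Fin 2) (Fin 2) ℝ := !![0, -1; α1, -α2]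
/-- 2×2 block for HDV subdiagonal. -/
def PP2 (α3 : ℝ) : Matrix (Fin 2) (Fin 2) ℝ := !![0, 1; 0, α3]
/-- 2×2 block for CAV diagonal. -/
def SS1 : Matrix (Fin 2) (Fin 2) ℝ := !![0, -1; 0, 0]
/-- 2×2 block for CAV subdiagonal. -/
def SS2 : Matrix (Fin 2) (Fin 2) ℝ := !![0, 1; 0, 0]

/-- The mixed-traffic system matrix `A ∈ ℝ^{2n×2n}`.  Vehicles are indexed `0,…,n-1`
(0-indexed versions of `1,…,n`); `isCAV i` says the `(i+1)`-th vehicle is a CAV.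
The `i`-th 2×2 diagonal block is `S1` for a CAV and `P1` for an HDV; the `(i,i-1)`
subdiagonal block is `S2` for a CAV and `P2` for an HDV; all other blocks vanish. -/
def trafficA (n : ℕ) (α1 α2 α3 : ℝ) (isCAV : Fin n → Prop) [DecidablePred isCAV] :
    Matrix (Fin (2 * n)) (Fin (2 * n)) ℝ :=
  Matrix.of fun r c =>
    if (r : ℕ) / 2 = (c : ℕ) / 2 then
      (if isCAV ⟨(r : ℕ) / 2, by have := r.isLt; omega⟩ then SS1 else PP1 α1 α2)
        ⟨(r : ℕ) % 2, by omega⟩ ⟨(c : ℕ) % 2, by omega⟩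
    else if (r : ℕ) / 2 = (c : ℕ) / 2 + 1 then
      (if isCAV ⟨(r : ℕ) / 2, by have := r.isLt; omega⟩ then SS2 else PP2 α3)
        ⟨(r : ℕ) % 2, by omega⟩ ⟨(c : ℕ) % 2, by omega⟩
    else 0

/-- The input matrix `B ∈ ℝ^{2n×m}`: the `j`-th column is the (1-indexed) standard basis
vector `e_{2n}^{2·i_j}`, where `ι j` is the 0-indexed position of the `j`-th CAV
(so the 1-indexed CAV index is `i_j = ι j + 1`). -/
def trafficB (n m : ℕ) (ι : Fin m → Fin n) : Matrix (Fin (2 * n)) (Fin m) ℝ :=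
  Matrix.of fun r j => if (r : ℕ) = 2 * (ι j : ℕ) + 1 then 1 else 0

/-- The controllability matrix `[B, AB, …, A^{N-1}B]` (columns indexed by `Fin N × q`). -/
def ctrbMat {N : ℕ} {q : Type*} [Fintype q] (A : Matrix (Fin N) (Fin N) ℝ)
    (B : Matrix (Fin N) q ℝ) : Matrix (Fin N) (Fin N × q) ℝ :=
  Matrix.of fun r kj => (A ^ (kj.1 : ℕ) * B) r kj.2

end

/-!
The head vehicle only reacts to itself: the first block row of `A` vanishes off the diagonal
block, and when the head vehicle is human-driven the first block row of `B` vanishes as well.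
So the first two coordinates are never reached by the input, every `A ^ k * B` has zero rows
there, and the controllability matrix has a zero row.
-/

namespace Matrix

variable {ι κ R : Type*}

theorem rank_lt_card_height_of_row_eq_zero [Fintype ι] [Fintype κ] [CommSemiring R]
    [StrongRankCondition R] (A : Matrix ι κ R) {r : ι} (hr : A r = 0) :
    A.rank < Fintype.card ι := by
  classical
  have hsupp : Function.support A.row ⊆ (Finset.univ.erase r : Finset ι) := fun i hi =>
    Finset.mem_erase.mpr ⟨fun hir => hi (hir ▸ hr), Finset.mem_univ i⟩
  calc A.rank ≤ (Finset.univ.erase r).card := A.rank_le_card_of_support_subset _ hsupp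
    _ < Fintype.card ι := Finset.card_erase_lt_of_mem (Finset.mem_univ r)

theorem pow_mul_apply_eq_zero_of_rows_closed [Fintype ι] [DecidableEq ι] [Semiring R]
    {A : Matrix ι ι R} {B : Matrix ι κ R} {s : Set ι}
    (hA : ∀ r ∈ s, ∀ c ∉ s, A r c = 0) (hB : ∀ r ∈ s, ∀ j, B r j = 0) (k : ℕ) :
    ∀ r ∈ s, ∀ j, (A ^ k * B) r j = 0 := by
  induction k with
  | zero => simpa using hB
  | succ k ih =>
    intro r hr j
    rw [pow_succ', Matrix.mul_assoc, Matrix.mul_apply]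
    refine Finset.sum_eq_zero fun c _ => ?_
    by_cases hc : c ∈ s
    · rw [ih c hc j, mul_zero]
    · rw [hA r hr c hc, zero_mul]

end Matrix

theorem trafficA_apply_eq_zero_of_head {n : ℕ} (α1 α2 α3 : ℝ) (isCAV : Fin n → Prop)
    [DecidablePred isCAV] {r c : Fin (2 * n)} (hr : (r : ℕ) < 2) (hc : 2 ≤ (c : ℕ)) :
    trafficA n α1 α2 α3 isCAV r c = 0 := by
  simp only [trafficA, Matrix.of_apply]
  rw [if_neg (by omega), if_neg (by omega)]

theorem trafficB_apply_eq_zero_of_head {n m : ℕ} {ι : Fin m → Fin n} (hι : ∀ j, 0 < (ι j : ℕ))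
    {r : Fin (2 * n)} (hr : (r : ℕ) < 2) (j : Fin m) : trafficB n m ι r j = 0 := by
  simp only [trafficB, Matrix.of_apply]
  rw [if_neg (by have := hι j; omega)]

theorem mixed_traffic_not_controllable_of_first_vehicle_HDV_general
    (n m : ℕ) (hm : 0 < m) (α1 α2 α3 : ℝ)
    (ι : Fin m → Fin n) (hmono : StrictMono ι)
    (hfirst : 0 < (ι ⟨0, hm⟩ : ℕ)) :
    (ctrbMat (trafficA n α1 α2 α3 (fun v => ∃ j, ι j = v)) (trafficB n m ι)).rank
      < 2 * n := by
  have hpos : ∀ j, 0 < (ι j : ℕ) := fun j =>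
    hfirst.trans_le (hmono.monotone (Fin.le_def.mpr (Nat.zero_le _)))
  have hhead_unreached := Matrix.pow_mul_apply_eq_zero_of_rows_closed
    (A := trafficA n α1 α2 α3 (fun v => ∃ j, ι j = v)) (B := trafficB n m ι)
    (s := {r | (r : ℕ) < 2})
    (fun _ hr _ hc => trafficA_apply_eq_zero_of_head α1 α2 α3 _ hr (not_lt.mp hc))
    (fun _ hr => trafficB_apply_eq_zero_of_head hpos hr)
  have h2n : 0 < 2 * n := by have := (ι ⟨0, hm⟩).pos; omega
  exact (Matrix.rank_lt_card_height_of_row_eq_zero _ (r := ⟨0, h2n⟩)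
    (funext fun kj => hhead_unreached kj.1 _ (by simp) kj.2)).trans_eq (Fintype.card_fin _)

/-- If the vehicle immediately behind the head vehicle is an HDV
(`i₁ > 1`, i.e. the 0-indexed first CAV position is positive), then the pair
`(A, B)` of the linearized mixed-traffic system is not controllable: the
controllability matrix has rank strictly less than `2n`. -/
theorem mixed_traffic_not_controllable_of_first_vehicle_HDV
    (n m : ℕ) (hn : 1 ≤ n) (hm : 0 < m) (α1 α2 α3 : ℝ)
    (ι : Fin m → Fin n) (hmono : StrictMono ι)
    (hfirst : 0 < (ι ⟨0, hm⟩ : ℕ)) :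
    (ctrbMat (trafficA n α1 α2 α3 (fun v => ∃ j, ι j = v)) (trafficB n m ι)).rank
      < 2 * n :=
  mixed_traffic_not_controllable_of_first_vehicle_HDV_general n m hm α1 α2 α3 ι hmono hfirst
end

section
/- Consider the linearized mixed-traffic system with n vehicles and CAV index set S = {i1 < i2 < ... < im} (m ≥ 1) with i1 > 1. If α1 > 0, α2 > α3 > 0 and α1 − α2·α3 + α3² ≠ 0, then the pair (A, B) is stabilizable: for every complex number λ with Re λ ≥ 0, the complex matrix [A − λI, B] has rank 2n. -/
open Matrix

section Col
variable {n : ℕ} {α1 α2 α3 : ℝ} {isC : Fin n → Prop} [DecidablePred isC]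

lemma tA_E1 (i : ℕ) (hi : i < n) (h0 : 2*i < 2*n) :
    trafficA n α1 α2 α3 isC ⟨2*i, h0⟩ ⟨2*i, h0⟩ = 0 := by
  have e1 : (2*i)/2 = i := by omega
  have e2 : (2*i)%2 = 0 := by omega
  simp only [trafficA, Matrix.of_apply, Fin.val_mk, e1, e2]
  split_ifs <;> simp [SS1, PP1]

lemma tA_E2 (i : ℕ) (hi : i < n) (h0 : 2*i < 2*n) (h1 : 2*i+1 < 2*n) :
    trafficA n α1 α2 α3 isC ⟨2*i+1, h1⟩ ⟨2*i, h0⟩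
      = if isC ⟨i, hi⟩ then 0 else α1 := by
  have e1 : (2*i)/2 = i := by omega
  have e1' : (2*i+1)/2 = i := by omega
  have e2 : (2*i)%2 = 0 := by omega
  have e2' : (2*i+1)%2 = 1 := by omega
  simp only [trafficA, Matrix.of_apply, Fin.val_mk, e1, e1', e2, e2']
  split_ifs <;> simp [SS1, PP1]

lemma tA_E3 (i : ℕ) (hi : i < n) (h0 : 2*i < 2*n) (h1 : 2*i+1 < 2*n) :
    trafficA n α1 α2 α3 isC ⟨2*i, h0⟩ ⟨2*i+1, h1⟩ = -1 := by
  have e1 : (2*i)/2 = i := by omega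
  have e1' : (2*i+1)/2 = i := by omega
  have e2 : (2*i)%2 = 0 := by omega
  have e2' : (2*i+1)%2 = 1 := by omega
  simp only [trafficA, Matrix.of_apply, Fin.val_mk, e1, e1', e2, e2']
  split_ifs <;> simp [SS1, PP1]

lemma tA_E4 (i : ℕ) (hi : i < n) (h1 : 2*i+1 < 2*n) :
    trafficA n α1 α2 α3 isC ⟨2*i+1, h1⟩ ⟨2*i+1, h1⟩
      = if isC ⟨i, hi⟩ then 0 else -α2 := by
  have e1' : (2*i+1)/2 = i := by omega
  have e2' : (2*i+1)%2 = 1 := by omega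
  simp only [trafficA, Matrix.of_apply, Fin.val_mk, e1', e2']
  split_ifs <;> simp [SS1, PP1]

lemma tA_E5 (i : ℕ) (hi : i+1 < n) (h1 : 2*i+1 < 2*n) (h2 : 2*i+2 < 2*n) :
    trafficA n α1 α2 α3 isC ⟨2*i+2, h2⟩ ⟨2*i+1, h1⟩ = 1 := by
  have e1' : (2*i+1)/2 = i := by omega
  have e1'' : (2*i+2)/2 = i+1 := by omega
  have e2' : (2*i+1)%2 = 1 := by omega
  have e2'' : (2*i+2)%2 = 0 := by omega
  simp only [trafficA, Matrix.of_apply, Fin.val_mk, e1', e1'', e2', e2'']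
  split_ifs <;> first | omega | simp [SS2, PP2]

lemma tA_E6 (i : ℕ) (hi : i+1 < n) (h1 : 2*i+1 < 2*n) (h3 : 2*i+3 < 2*n) :
    trafficA n α1 α2 α3 isC ⟨2*i+3, h3⟩ ⟨2*i+1, h1⟩
      = if isC ⟨i+1, hi⟩ then 0 else α3 := by
  have e1' : (2*i+1)/2 = i := by omega
  have e1'' : (2*i+3)/2 = i+1 := by omega
  have e2' : (2*i+1)%2 = 1 := by omega
  have e2'' : (2*i+3)%2 = 1 := by omega
  simp only [trafficA, Matrix.of_apply, Fin.val_mk, e1', e1'', e2', e2'']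
  split_ifs <;> first | omega | simp [SS2, PP2]

lemma tA_Z0 (i : ℕ) (hi : i < n) (h0 : 2*i < 2*n) (r : Fin (2*n))
    (hr1 : (r : ℕ) ≠ 2*i) (hr2 : (r : ℕ) ≠ 2*i+1) :
    trafficA n α1 α2 α3 isC r ⟨2*i, h0⟩ = 0 := by
  have e1 : (2*i)/2 = i := by omega
  have e2 : (2*i)%2 = 0 := by omega
  have hrm : (r : ℕ) % 2 = 0 ∨ (r : ℕ) % 2 = 1 := by omega
  simp only [trafficA, Matrix.of_apply, Fin.val_mk, e1, e2]
  split_ifs <;> first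
    | rfl
    | omega
    | (rcases hrm with hrm | hrm <;> simp only [hrm] <;> simp [SS2, PP2])

lemma tA_Z1 (i : ℕ) (hi : i < n) (h1 : 2*i+1 < 2*n) (r : Fin (2*n))
    (hr1 : (r : ℕ) ≠ 2*i) (hr2 : (r : ℕ) ≠ 2*i+1)
    (hr3 : (r : ℕ) ≠ 2*i+2) (hr4 : (r : ℕ) ≠ 2*i+3) :
    trafficA n α1 α2 α3 isC r ⟨2*i+1, h1⟩ = 0 := by
  have e1 : (2*i+1)/2 = i := by omega
  have e2 : (2*i+1)%2 = 1 := by omega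
  simp only [trafficA, Matrix.of_apply, Fin.val_mk, e1, e2]
  split_ifs <;> first | rfl | omega

end Col

noncomputable def Amat (n : ℕ) (α1 α2 α3 : ℝ) (isC : Fin n → Prop) [DecidablePred isC]
    (lam : ℂ) : Matrix (Fin (2*n)) (Fin (2*n)) ℂ :=
  (trafficA n α1 α2 α3 isC).map Complex.ofReal - lam • 1

section Col2
variable {n : ℕ} {α1 α2 α3 : ℝ} {isC : Fin n → Prop} [DecidablePred isC]
  {lam : ℂ} {v : Fin (2*n) → ℂ}

lemma Amat_apply (r c : Fin (2*n)) :
    Amat n α1 α2 α3 isC lam r c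
      = ((trafficA n α1 α2 α3 isC r c : ℝ) : ℂ) - (if r = c then lam else 0) := by
  by_cases h : r = c <;>
    simp [Amat, Matrix.sub_apply, Matrix.map_apply, Matrix.smul_apply, Matrix.one_apply, h]

lemma colEven (i : ℕ) (hi : i < n) :
    (v ᵥ* Amat n α1 α2 α3 isC lam) ⟨2*i, by omega⟩
      = v ⟨2*i, by omega⟩ * (-lam)
        + v ⟨2*i+1, by omega⟩ * (if isC ⟨i, hi⟩ then 0 else (α1:ℂ)) := by
  have h0 : 2*i < 2*n := by omega
  have h1 : 2*i+1 < 2*n := by omega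
  have hne : (⟨2*i, h0⟩ : Fin (2*n)) ≠ ⟨2*i+1, h1⟩ := Fin.ne_of_val_ne (show 2*i ≠ 2*i+1 by omega)
  have key : (v ᵥ* Amat n α1 α2 α3 isC lam) ⟨2*i, h0⟩
      = ∑ r : Fin (2*n), v r * Amat n α1 α2 α3 isC lam r ⟨2*i, h0⟩ := rfl
  rw [key, ← Finset.sum_subset
      (Finset.subset_univ ({⟨2*i, h0⟩, ⟨2*i+1, h1⟩} : Finset (Fin (2*n))))]
  · rw [Finset.sum_pair hne]
    rw [Amat_apply, Amat_apply, tA_E1 i hi, tA_E2 i hi,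
      if_pos rfl, if_neg hne.symm]
    split_ifs <;> push_cast <;> ring
  · intro r _ hr
    simp only [Finset.mem_insert, Finset.mem_singleton, Fin.ext_iff, Fin.val_mk] at hr
    push_neg at hr
    rw [Amat_apply, tA_Z0 i hi h0 r hr.1 hr.2,
      if_neg (Fin.ne_of_val_ne hr.1)]
    simp

lemma colOdd (i : ℕ) (hi : i+1 < n) :
    (v ᵥ* Amat n α1 α2 α3 isC lam) ⟨2*i+1, by omega⟩
      = v ⟨2*i, by omega⟩ * (-1)
        + v ⟨2*i+1, by omega⟩ * ((if isC ⟨i, by omega⟩ then 0 else (-α2:ℂ)) - lam)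
        + v ⟨2*i+2, by omega⟩
        + v ⟨2*i+3, by omega⟩ * (if isC ⟨i+1, hi⟩ then 0 else (α3:ℂ)) := by
  have h0 : 2*i < 2*n := by omega
  have h1 : 2*i+1 < 2*n := by omega
  have h2 : 2*i+2 < 2*n := by omega
  have h3 : 2*i+3 < 2*n := by omega
  have hi' : i < n := by omega
  have hm1 : (⟨2*i, h0⟩ : Fin (2*n)) ∉
      ({⟨2*i+1, h1⟩, ⟨2*i+2, h2⟩, ⟨2*i+3, h3⟩} : Finset (Fin (2*n))) := by
    simp only [Finset.mem_insert, Finset.mem_singleton, Fin.mk.injEq]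
    omega
  have hm2 : (⟨2*i+1, h1⟩ : Fin (2*n)) ∉
      ({⟨2*i+2, h2⟩, ⟨2*i+3, h3⟩} : Finset (Fin (2*n))) := by
    simp only [Finset.mem_insert, Finset.mem_singleton, Fin.mk.injEq]
    omega
  have hne3 : (⟨2*i+2, h2⟩ : Fin (2*n)) ≠ ⟨2*i+3, h3⟩ := Fin.ne_of_val_ne (show 2*i+2 ≠ 2*i+3 by omega)
  have key : (v ᵥ* Amat n α1 α2 α3 isC lam) ⟨2*i+1, h1⟩
      = ∑ r : Fin (2*n), v r * Amat n α1 α2 α3 isC lam r ⟨2*i+1, h1⟩ := rfl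
  rw [key, ← Finset.sum_subset (Finset.subset_univ
      ({⟨2*i, h0⟩, ⟨2*i+1, h1⟩, ⟨2*i+2, h2⟩, ⟨2*i+3, h3⟩} : Finset (Fin (2*n))))]
  · rw [Finset.sum_insert hm1, Finset.sum_insert hm2, Finset.sum_pair hne3]
    rw [Amat_apply, Amat_apply, Amat_apply, Amat_apply,
      tA_E3 i hi', tA_E4 i hi', tA_E5 i hi, tA_E6 i hi,
      if_neg (Fin.ne_of_val_ne (show 2*i ≠ 2*i+1 by omega)), if_pos rfl,
      if_neg (Fin.ne_of_val_ne (show 2*i+2 ≠ 2*i+1 by omega)),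
      if_neg (Fin.ne_of_val_ne (show 2*i+3 ≠ 2*i+1 by omega))]
    split_ifs <;> push_cast <;> ring
  · intro r _ hr
    simp only [Finset.mem_insert, Finset.mem_singleton, Fin.ext_iff, Fin.val_mk] at hr
    push_neg at hr
    obtain ⟨hr1, hr2, hr3, hr4⟩ := hr
    rw [Amat_apply, tA_Z1 i hi' h1 r hr1 hr2 hr3 hr4,
      if_neg (Fin.ne_of_val_ne hr2)]
    simp

lemma colOddLast (i : ℕ) (hi : i+1 = n) :
    (v ᵥ* Amat n α1 α2 α3 isC lam) ⟨2*i+1, by omega⟩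
      = v ⟨2*i, by omega⟩ * (-1)
        + v ⟨2*i+1, by omega⟩ * ((if isC ⟨i, by omega⟩ then 0 else (-α2:ℂ)) - lam) := by
  have h0 : 2*i < 2*n := by omega
  have h1 : 2*i+1 < 2*n := by omega
  have hi' : i < n := by omega
  have hne : (⟨2*i, h0⟩ : Fin (2*n)) ≠ ⟨2*i+1, h1⟩ := Fin.ne_of_val_ne (show 2*i ≠ 2*i+1 by omega)
  have key : (v ᵥ* Amat n α1 α2 α3 isC lam) ⟨2*i+1, h1⟩
      = ∑ r : Fin (2*n), v r * Amat n α1 α2 α3 isC lam r ⟨2*i+1, h1⟩ := rfl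
  rw [key, ← Finset.sum_subset
      (Finset.subset_univ ({⟨2*i, h0⟩, ⟨2*i+1, h1⟩} : Finset (Fin (2*n))))]
  · rw [Finset.sum_pair hne]
    rw [Amat_apply, Amat_apply, tA_E3 i hi', tA_E4 i hi',
      if_neg hne, if_pos rfl]
    split_ifs <;> push_cast <;> ring
  · intro r _ hr
    simp only [Finset.mem_insert, Finset.mem_singleton, Fin.ext_iff, Fin.val_mk] at hr
    push_neg at hr
    have hr3 : (r : ℕ) ≠ 2*i+2 := by have := r.isLt; omega
    have hr4 : (r : ℕ) ≠ 2*i+3 := by have := r.isLt; omega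
    rw [Amat_apply, tA_Z1 i hi' h1 r hr.1 hr.2 hr3 hr4,
      if_neg (Fin.ne_of_val_ne hr.2)]
    simp

end Col2

private lemma quad_ne {α1 α2 : ℝ} (h1 : 0 < α1) (h2 : 0 < α2) {lam : ℂ} (hre : 0 ≤ lam.re) :
    (α1 : ℂ) + (α2 : ℂ) * lam + lam ^ 2 ≠ 0 := by
  intro h
  rw [Complex.ext_iff] at h
  simp only [Complex.add_re, Complex.add_im, Complex.mul_re, Complex.mul_im,
    Complex.ofReal_re, Complex.ofReal_im, Complex.zero_re, Complex.zero_im, pow_two] at h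
  obtain ⟨hr, him⟩ := h
  have h3 : lam.im * (α2 + 2 * lam.re) = 0 := by linear_combination him
  rcases mul_eq_zero.mp h3 with hy | hx
  · rw [hy] at hr
    nlinarith [mul_nonneg hre hre]
  · linarith

/-- If `i₁ > 1`, `α₁ > 0`, `α₂ > α₃ > 0` and `α₁ - α₂α₃ + α₃² ≠ 0`,
then the pair `(A, B)` of the linearized mixed-traffic system is stabilizable:
for every `λ ∈ ℂ` with `Re λ ≥ 0`, the matrix `[A - λI, B]` has (full) rank `2n`. -/
theorem mixed_traffic_stabilizable
    (n m : ℕ) (hn : 1 ≤ n) (hm : 0 < m) (α1 α2 α3 : ℝ)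
    (ι : Fin m → Fin n) (hmono : StrictMono ι)
    (hfirst : 0 < (ι ⟨0, hm⟩ : ℕ))
    (hα1 : 0 < α1) (hα23 : α3 < α2) (hα3 : 0 < α3)
    (hcond : α1 - α2 * α3 + α3 ^ 2 ≠ 0) :
    ∀ lam : ℂ, 0 ≤ lam.re →
      (Matrix.fromCols
        ((trafficA n α1 α2 α3 (fun v => ∃ j, ι j = v)).map Complex.ofReal - lam • 1)
        ((trafficB n m ι).map Complex.ofReal)).rank = 2 * n := by
  intro lam hre
  have hα2 : 0 < α2 := lt_trans hα3 hα23
  rw [show ((trafficA n α1 α2 α3 (fun v => ∃ j, ι j = v)).map Complex.ofReal - lam • 1)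
      = Amat n α1 α2 α3 (fun v => ∃ j, ι j = v) lam from rfl]
  set M := Matrix.fromCols (Amat n α1 α2 α3 (fun v => ∃ j, ι j = v) lam)
    ((trafficB n m ι).map Complex.ofReal) with hMdef
  -- left-null-vector injectivity
  have hinj : ∀ v : Fin (2*n) → ℂ, v ᵥ* M = 0 → v = 0 := by
    intro v hv
    rw [hMdef, Matrix.vecMul_fromCols] at hv
    have hA : ∀ c, (v ᵥ* Amat n α1 α2 α3 (fun w => ∃ j, ι j = w) lam) c = 0 := by
      intro c
      have := congrFun hv (Sum.inl c)
      simpa using this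
    have hBv : ∀ j : Fin m, v ⟨2*(ι j : ℕ)+1, by have := (ι j).isLt; omega⟩ = 0 := by
      intro j
      have hj := congrFun hv (Sum.inr j)
      simp only [Sum.elim_inr, Pi.zero_apply] at hj
      have key : (v ᵥ* (trafficB n m ι).map Complex.ofReal) j
          = ∑ r : Fin (2*n), v r * ((trafficB n m ι r j : ℝ) : ℂ) := rfl
      have heach : ∀ r : Fin (2*n), v r * ((trafficB n m ι r j : ℝ) : ℂ)
          = if r = (⟨2*(ι j : ℕ)+1, by have := (ι j).isLt; omega⟩ : Fin (2*n))
            then v r else 0 := by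
        intro r
        simp only [trafficB, Matrix.of_apply]
        by_cases h : (r : ℕ) = 2*(ι j : ℕ)+1
        · rw [if_pos h, if_pos (Fin.ext h)]
          simp
        · rw [if_neg h, if_neg (fun hh => h (by rw [hh]))]
          simp
      rw [key, Finset.sum_congr rfl (fun r _ => heach r), Finset.sum_ite_eq'] at hj
      simpa using hj
    have hCAVzero : ∀ (i : ℕ) (hi : i < n), (∃ j, ι j = (⟨i, hi⟩ : Fin n)) →
        v ⟨2*i+1, by omega⟩ = 0 := by
      rintro i hi ⟨j, hj⟩
      have hval : (ι j : ℕ) = i := by rw [hj]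
      have hfin : (⟨2*i+1, by omega⟩ : Fin (2*n))
          = ⟨2*(ι j : ℕ)+1, by have := (ι j).isLt; omega⟩ :=
        Fin.ext (show 2*i+1 = 2*(ι j : ℕ)+1 by omega)
      rw [hfin]
      exact hBv j
    have hq : ((α1 : ℂ) + (α2 : ℂ) * lam + lam ^ 2) ≠ 0 := quad_ne hα1 hα2 hre
    have main : ∀ (d i : ℕ) (hi : i < n), i + d + 1 = n →
        v ⟨2*i, by omega⟩ = 0 ∧ v ⟨2*i+1, by omega⟩ = 0 := by
      intro d
      induction d with
      | zero =>
        intro i hi hlast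
        have e1 := hA ⟨2*i, by omega⟩
        rw [colEven i hi] at e1
        have e2 := hA ⟨2*i+1, by omega⟩
        rw [colOddLast i (by omega)] at e2
        by_cases hc : (∃ j, ι j = (⟨i, hi⟩ : Fin n))
        · have hb := hCAVzero i hi hc
          rw [hb] at e2
          exact ⟨by linear_combination -e2, hb⟩
        · rw [if_neg hc] at e1
          rw [if_neg hc] at e2
          have hv1 : ((α1 : ℂ) + (α2 : ℂ) * lam + lam ^ 2) * v ⟨2*i+1, by omega⟩ = 0 := by
            linear_combination e1 - lam * e2
          have hb := (mul_eq_zero.mp hv1).resolve_left hq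
          rw [hb] at e2
          exact ⟨by linear_combination -e2, hb⟩
      | succ d ih =>
        intro i hi hlast
        have hnext := ih (i+1) (by omega) (by omega)
        have hz2 : v ⟨2*i+2, by omega⟩ = 0 := by
          have h := hnext.1
          rwa [show (⟨2*(i+1), by omega⟩ : Fin (2*n)) = ⟨2*i+2, by omega⟩ from
            Fin.ext (show 2*(i+1) = 2*i+2 by omega)] at h
        have hz3 : v ⟨2*i+3, by omega⟩ = 0 := by
          have h := hnext.2
          rwa [show (⟨2*(i+1)+1, by omega⟩ : Fin (2*n)) = ⟨2*i+3, by omega⟩ from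
            Fin.ext (show 2*(i+1)+1 = 2*i+3 by omega)] at h
        have e1 := hA ⟨2*i, by omega⟩
        rw [colEven i hi] at e1
        have e2 := hA ⟨2*i+1, by omega⟩
        rw [colOdd i (by omega)] at e2
        rw [hz2, hz3] at e2
        by_cases hc : (∃ j, ι j = (⟨i, hi⟩ : Fin n))
        · have hb := hCAVzero i hi hc
          rw [hb] at e2
          exact ⟨by linear_combination -e2, hb⟩
        · rw [if_neg hc] at e1
          rw [if_neg hc] at e2
          have hv1 : ((α1 : ℂ) + (α2 : ℂ) * lam + lam ^ 2) * v ⟨2*i+1, by omega⟩ = 0 := by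
            linear_combination e1 - lam * e2
          have hb := (mul_eq_zero.mp hv1).resolve_left hq
          rw [hb] at e2
          exact ⟨by linear_combination -e2, hb⟩
    funext r
    simp only [Pi.zero_apply]
    have hi : (r : ℕ)/2 < n := by have := r.isLt; omega
    obtain ⟨h0, h1⟩ := main (n - (r : ℕ)/2 - 1) ((r : ℕ)/2) hi (by omega)
    rcases (show (r : ℕ) = 2*((r : ℕ)/2) ∨ (r : ℕ) = 2*((r : ℕ)/2)+1 by omega) with h | h
    · rw [show r = ⟨2*((r : ℕ)/2), by omega⟩ from Fin.ext h]
      exact h0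
    · rw [show r = ⟨2*((r : ℕ)/2)+1, by omega⟩ from Fin.ext h]
      exact h1
  -- rank computation
  rw [← Matrix.rank_transpose]
  have hinj' : Function.Injective (Mᵀ.mulVecLin) := by
    rw [← LinearMap.ker_eq_bot, LinearMap.ker_eq_bot']
    intro v hv
    apply hinj
    rw [← Matrix.mulVec_transpose]
    rw [Matrix.mulVecLin_apply] at hv
    exact hv
  rw [Matrix.rank, LinearMap.finrank_range_of_inj hinj', Module.finrank_fin_fun]
end

section
/- When the CAV index set is the singleton S = {i1} with 1 < i1 ≤ n, if α1 > 0, α2 > α3 > 0 and α1 − α2·α3 + α3² ≠ 0, then the pair (A, B) of the linearized mixed-traffic system is not controllable but is stabilizable. Moreover, the leading principal submatrix of A of size 2(i1 − 1) (the subsystem of states s̃_1, ṽ_1, ..., s̃_{i1−1}, ṽ_{i1−1}) is Hurwitz, and the pair (A', B') formed by the trailing principal submatrix A' of A on rows/columns 2i1 − 1 through 2n together with the corresponding rows B' of B (the subsystem of states s̃_{i1}, ṽ_{i1}, ..., s̃_n, ṽ_n) is controllable. -/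
open Matrix

section Entries
variable {n : ℕ} {α1 α2 α3 : ℝ} {cav : Fin n → Prop} [DecidablePred cav]

-- zero when r-block > c-block + 1 or r-block < c-block
lemma trafficA_zero (r c : Fin (2*n)) (h : (r:ℕ)/2 ≠ (c:ℕ)/2 ∧ (r:ℕ)/2 ≠ (c:ℕ)/2 + 1) :
    trafficA n α1 α2 α3 cav r c = 0 := by
  simp only [trafficA, Matrix.of_apply, if_neg h.1, if_neg h.2]

-- column 2j: the only possibly-nonzero entry is at row 2j+1
lemma trafficA_col_even_ne (j : ℕ) (hj : j < n) (r : Fin (2*n)) (hr : (r:ℕ) ≠ 2*j+1)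
    (c : Fin (2*n)) (hc : (c:ℕ) = 2*j) :
    trafficA n α1 α2 α3 cav r c = 0 := by
  simp only [trafficA, Matrix.of_apply]
  by_cases h1 : (r:ℕ)/2 = (c:ℕ)/2
  · rw [if_pos h1]
    have hrv : (r:ℕ) = 2*j := by omega
    have h2 : ((⟨(r:ℕ) % 2, by omega⟩ : Fin 2)) = (0 : Fin 2) := by
      apply Fin.ext; simp only [Fin.val_zero]; omega
    have h3 : ((⟨(c:ℕ) % 2, by omega⟩ : Fin 2)) = (0 : Fin 2) := by
      apply Fin.ext; simp only [Fin.val_zero]; omega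
    rw [h2, h3]
    split <;> simp [SS1, PP1]
  · rw [if_neg h1]
    by_cases h2 : (r:ℕ)/2 = (c:ℕ)/2 + 1
    · rw [if_pos h2]
      have h3 : ((⟨(c:ℕ) % 2, by omega⟩ : Fin 2)) = (0 : Fin 2) := by
        apply Fin.ext; simp only [Fin.val_zero]; omega
      rw [h3]
      rcases Nat.mod_two_eq_zero_or_one (r:ℕ) with hm | hm
      · have h4 : ((⟨(r:ℕ) % 2, by omega⟩ : Fin 2)) = (0 : Fin 2) := by
          apply Fin.ext; simp only [Fin.val_zero, Fin.val_one]; omega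
        rw [h4]; split <;> simp [SS2, PP2]
      · have h4 : ((⟨(r:ℕ) % 2, by omega⟩ : Fin 2)) = (1 : Fin 2) := by
          apply Fin.ext; simp only [Fin.val_zero, Fin.val_one]; omega
        rw [h4]; split <;> simp [SS2, PP2]
    · rw [if_neg h2]

lemma trafficA_diag_10 (j : ℕ) (hj : j < n) (r c : Fin (2*n)) (hr : (r:ℕ) = 2*j+1)
    (hc : (c:ℕ) = 2*j) :
    trafficA n α1 α2 α3 cav r c = if cav ⟨j, hj⟩ then 0 else α1 := by
  simp only [trafficA, Matrix.of_apply]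
  rw [if_pos (by omega : (r:ℕ)/2 = (c:ℕ)/2)]
  have h2 : ((⟨(r:ℕ) % 2, by omega⟩ : Fin 2)) = (1 : Fin 2) := by
    apply Fin.ext; simp only [Fin.val_zero, Fin.val_one]; omega
  have h3 : ((⟨(c:ℕ) % 2, by omega⟩ : Fin 2)) = (0 : Fin 2) := by
    apply Fin.ext; simp only [Fin.val_zero]; omega
  have h4 : ((⟨(r:ℕ)/2, by have := r.isLt; omega⟩ : Fin n)) = ⟨j, hj⟩ := by
    apply Fin.ext; simp only [Fin.val_zero, Fin.val_one]; omega
  rw [h2, h3, h4]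
  split <;> simp [SS1, PP1]

end Entries

section Entries2
variable {n : ℕ} {α1 α2 α3 : ℝ} {cav : Fin n → Prop} [DecidablePred cav]

lemma trafficA_col_odd_ne (j : ℕ) (r : Fin (2*n))
    (hr : (r:ℕ) ≠ 2*j ∧ (r:ℕ) ≠ 2*j+1 ∧ (r:ℕ) ≠ 2*j+2 ∧ (r:ℕ) ≠ 2*j+3)
    (c : Fin (2*n)) (hc : (c:ℕ) = 2*j+1) :
    trafficA n α1 α2 α3 cav r c = 0 := by
  apply trafficA_zero
  omega

lemma trafficA_odd_00 (j : ℕ) (r c : Fin (2*n)) (hr : (r:ℕ) = 2*j) (hc : (c:ℕ) = 2*j+1) :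
    trafficA n α1 α2 α3 cav r c = -1 := by
  simp only [trafficA, Matrix.of_apply]
  rw [if_pos (by omega : (r:ℕ)/2 = (c:ℕ)/2)]
  have h2 : ((⟨(r:ℕ) % 2, by omega⟩ : Fin 2)) = (0 : Fin 2) := by
    apply Fin.ext; simp only [Fin.val_zero]; omega
  have h3 : ((⟨(c:ℕ) % 2, by omega⟩ : Fin 2)) = (1 : Fin 2) := by
    apply Fin.ext; simp only [Fin.val_one]; omega
  rw [h2, h3]
  split <;> simp [SS1, PP1]

lemma trafficA_odd_11 (j : ℕ) (hj : j < n) (r c : Fin (2*n)) (hr : (r:ℕ) = 2*j+1)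
    (hc : (c:ℕ) = 2*j+1) :
    trafficA n α1 α2 α3 cav r c = if cav ⟨j, hj⟩ then 0 else -α2 := by
  simp only [trafficA, Matrix.of_apply]
  rw [if_pos (by omega : (r:ℕ)/2 = (c:ℕ)/2)]
  have h2 : ((⟨(r:ℕ) % 2, by omega⟩ : Fin 2)) = (1 : Fin 2) := by
    apply Fin.ext; simp only [Fin.val_one]; omega
  have h3 : ((⟨(c:ℕ) % 2, by omega⟩ : Fin 2)) = (1 : Fin 2) := by
    apply Fin.ext; simp only [Fin.val_one]; omega
  have h4 : ((⟨(r:ℕ)/2, by have := r.isLt; omega⟩ : Fin n)) = ⟨j, hj⟩ := by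
    apply Fin.ext; simp only []; omega
  rw [h2, h3, h4]
  split <;> simp [SS1, PP1]

lemma trafficA_sub_01 (j : ℕ) (r c : Fin (2*n)) (hr : (r:ℕ) = 2*j+2) (hc : (c:ℕ) = 2*j+1) :
    trafficA n α1 α2 α3 cav r c = 1 := by
  simp only [trafficA, Matrix.of_apply]
  rw [if_neg (by omega : ¬ (r:ℕ)/2 = (c:ℕ)/2), if_pos (by omega : (r:ℕ)/2 = (c:ℕ)/2 + 1)]
  have h2 : ((⟨(r:ℕ) % 2, by omega⟩ : Fin 2)) = (0 : Fin 2) := by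
    apply Fin.ext; simp only [Fin.val_zero]; omega
  have h3 : ((⟨(c:ℕ) % 2, by omega⟩ : Fin 2)) = (1 : Fin 2) := by
    apply Fin.ext; simp only [Fin.val_one]; omega
  rw [h2, h3]
  split <;> simp [SS2, PP2]

lemma trafficA_sub_11 (j : ℕ) (hj : j + 1 < n) (r c : Fin (2*n)) (hr : (r:ℕ) = 2*j+3)
    (hc : (c:ℕ) = 2*j+1) :
    trafficA n α1 α2 α3 cav r c = if cav ⟨j+1, hj⟩ then 0 else α3 := by
  simp only [trafficA, Matrix.of_apply]
  rw [if_neg (by omega : ¬ (r:ℕ)/2 = (c:ℕ)/2), if_pos (by omega : (r:ℕ)/2 = (c:ℕ)/2 + 1)]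
  have h2 : ((⟨(r:ℕ) % 2, by omega⟩ : Fin 2)) = (1 : Fin 2) := by
    apply Fin.ext; simp only [Fin.val_one]; omega
  have h3 : ((⟨(c:ℕ) % 2, by omega⟩ : Fin 2)) = (1 : Fin 2) := by
    apply Fin.ext; simp only [Fin.val_one]; omega
  have h4 : ((⟨(r:ℕ)/2, by have := r.isLt; omega⟩ : Fin n)) = ⟨j+1, hj⟩ := by
    apply Fin.ext; simp only []; omega
  rw [h2, h3, h4]
  split <;> simp [SS2, PP2]

end Entries2

noncomputable def extW (K : ℕ) (w : Fin (2*K) → ℂ) : ℕ → ℂ :=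
  fun i => if h : i < 2*K then w ⟨i,h⟩ else 0

lemma extW_zero (K : ℕ) (w : Fin (2*K) → ℂ) (i : ℕ) (h : 2*K ≤ i) : extW K w i = 0 := by
  simp [extW, Nat.not_lt.mpr h]

lemma extW_apply (K : ℕ) (w : Fin (2*K) → ℂ) (i : ℕ) (h : i < 2*K) :
    extW K w i = w ⟨i, h⟩ := by simp [extW, h]

lemma traffic_eqs (K : ℕ) (α1 α2 α3 : ℝ) (cav : Fin K → Prop) [DecidablePred cav]
    (cavN : ℕ → Prop) [DecidablePred cavN]
    (hcompat : ∀ (j : ℕ) (h : j < K), cavN j ↔ cav ⟨j, h⟩)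
    (μ : ℂ) (w : Fin (2*K) → ℂ)
    (hw : w ᵥ* ((trafficA K α1 α2 α3 cav).map Complex.ofReal) = μ • w) :
    (∀ j < K, (if cavN j then 0 else (α1:ℂ)) * extW K w (2*j+1) = μ * extW K w (2*j)) ∧
    (∀ j < K, -extW K w (2*j) - (if cavN j then 0 else (α2:ℂ)) * extW K w (2*j+1)
        + extW K w (2*j+2) + (if cavN (j+1) then 0 else (α3:ℂ)) * extW K w (2*j+3)
        = μ * extW K w (2*j+1)) := by
  constructor
  · intro j hj
    have hc := congrFun hw ⟨2*j, by omega⟩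
    simp only [Matrix.vecMul, dotProduct, Pi.smul_apply, smul_eq_mul] at hc
    rw [Finset.sum_eq_single_of_mem (⟨2*j+1, by omega⟩ : Fin (2*K)) (Finset.mem_univ _)] at hc
    · rw [Matrix.map_apply,
        trafficA_diag_10 j hj _ _ (by simp) (by simp)] at hc
      rw [extW_apply K w (2*j+1) (by omega), extW_apply K w (2*j) (by omega)]
      rw [← hc]
      by_cases hcv : cavN j
      · rw [if_pos hcv, if_pos ((hcompat j hj).mp hcv)]; push_cast; ring
      · rw [if_neg hcv, if_neg (fun hh => hcv ((hcompat j hj).mpr hh))]; push_cast; ring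
    · intro b _ hb
      rw [Matrix.map_apply, trafficA_col_even_ne j hj b (by
          intro hbv; exact hb (Fin.ext (by simpa using hbv))) _ (by simp)]
      simp
  · intro j hj
    have hc := congrFun hw ⟨2*j+1, by omega⟩
    simp only [Matrix.vecMul, dotProduct, Pi.smul_apply, smul_eq_mul] at hc
    rw [extW_apply K w (2*j+1) (by omega), extW_apply K w (2*j) (by omega)]
    by_cases hj1 : j + 1 < K
    · -- four nonzero rows
      set r0 : Fin (2*K) := ⟨2*j, by omega⟩
      set r1 : Fin (2*K) := ⟨2*j+1, by omega⟩
      set r2 : Fin (2*K) := ⟨2*j+2, by omega⟩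
      set r3 : Fin (2*K) := ⟨2*j+3, by omega⟩
      have hvan : ∀ x ∈ Finset.univ, x ∉ ({r0, r1, r2, r3} : Finset (Fin (2*K))) →
          w x * ((trafficA K α1 α2 α3 cav).map Complex.ofReal) x ⟨2*j+1, by omega⟩ = 0 := by
        intro x _ hx
        simp only [Finset.mem_insert, Finset.mem_singleton, r0, r1, r2, r3, Fin.ext_iff] at hx
        push_neg at hx
        rw [Matrix.map_apply, trafficA_col_odd_ne j x (by simpa using hx) _ (by simp)]
        simp
      rw [← Finset.sum_subset (Finset.subset_univ ({r0, r1, r2, r3} : Finset (Fin (2*K)))) hvan] at hc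
      have hd0 : r0 ∉ ({r1, r2, r3} : Finset (Fin (2*K))) := by
        simp only [Finset.mem_insert, Finset.mem_singleton, r0, r1, r2, r3, Fin.ext_iff]; omega
      have hd1 : r1 ∉ ({r2, r3} : Finset (Fin (2*K))) := by
        simp only [Finset.mem_insert, Finset.mem_singleton, r1, r2, r3, Fin.ext_iff]; omega
      have hd2 : r2 ∉ ({r3} : Finset (Fin (2*K))) := by
        simp only [Finset.mem_singleton, r2, r3, Fin.ext_iff]; omega
      rw [show ({r0, r1, r2, r3} : Finset (Fin (2*K))) = insert r0 (insert r1 (insert r2 {r3})) from rfl,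
        Finset.sum_insert hd0, Finset.sum_insert hd1, Finset.sum_insert hd2,
        Finset.sum_singleton] at hc
      rw [Matrix.map_apply, trafficA_odd_00 j r0 _ (by simp [r0]) (by simp),
          Matrix.map_apply, trafficA_odd_11 j hj r1 _ (by simp [r1]) (by simp),
          Matrix.map_apply, trafficA_sub_01 j r2 _ (by simp [r2]) (by simp),
          Matrix.map_apply, trafficA_sub_11 j hj1 r3 _ (by simp [r3]) (by simp)] at hc
      rw [extW_apply K w (2*j+2) (by omega), extW_apply K w (2*j+3) (by omega)]
      rw [← hc]
      by_cases hcv : cavN j <;> by_cases hcv1 : cavN (j+1)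
      · rw [if_pos hcv, if_pos ((hcompat j hj).mp hcv), if_pos hcv1,
          if_pos ((hcompat (j+1) hj1).mp hcv1)]; push_cast; ring
      · rw [if_pos hcv, if_pos ((hcompat j hj).mp hcv), if_neg hcv1,
          if_neg (fun hh => hcv1 ((hcompat (j+1) hj1).mpr hh))]; push_cast; ring
      · rw [if_neg hcv, if_neg (fun hh => hcv ((hcompat j hj).mpr hh)), if_pos hcv1,
          if_pos ((hcompat (j+1) hj1).mp hcv1)]; push_cast; ring
      · rw [if_neg hcv, if_neg (fun hh => hcv ((hcompat j hj).mpr hh)), if_neg hcv1,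
          if_neg (fun hh => hcv1 ((hcompat (j+1) hj1).mpr hh))]; push_cast; ring
    · -- top block: only two nonzero rows
      set r0 : Fin (2*K) := ⟨2*j, by omega⟩
      set r1 : Fin (2*K) := ⟨2*j+1, by omega⟩
      have hvan : ∀ x ∈ Finset.univ, x ∉ ({r0, r1} : Finset (Fin (2*K))) →
          w x * ((trafficA K α1 α2 α3 cav).map Complex.ofReal) x ⟨2*j+1, by omega⟩ = 0 := by
        intro x _ hx
        simp only [Finset.mem_insert, Finset.mem_singleton, r0, r1, Fin.ext_iff] at hx
        push_neg at hx
        have hx2 : (x:ℕ) ≠ 2*j+2 ∧ (x:ℕ) ≠ 2*j+3 := by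
          have := x.isLt; omega
        rw [Matrix.map_apply, trafficA_col_odd_ne j x ⟨hx.1, hx.2, hx2.1, hx2.2⟩ _ (by simp)]
        simp
      rw [← Finset.sum_subset (Finset.subset_univ ({r0, r1} : Finset (Fin (2*K)))) hvan] at hc
      have hd0 : r0 ∉ ({r1} : Finset (Fin (2*K))) := by
        simp only [Finset.mem_singleton, r0, r1, Fin.ext_iff]; omega
      rw [show ({r0, r1} : Finset (Fin (2*K))) = insert r0 {r1} from rfl,
        Finset.sum_insert hd0, Finset.sum_singleton] at hc
      rw [Matrix.map_apply, trafficA_odd_00 j r0 _ (by simp [r0]) (by simp),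
          Matrix.map_apply, trafficA_odd_11 j hj r1 _ (by simp [r1]) (by simp)] at hc
      rw [extW_zero K w (2*j+2) (by omega), extW_zero K w (2*j+3) (by omega)]
      rw [← hc]
      by_cases hcv : cavN j
      · rw [if_pos hcv, if_pos ((hcompat j hj).mp hcv)]
        by_cases hcv1 : cavN (j+1) <;> [rw [if_pos hcv1]; rw [if_neg hcv1]] <;> push_cast <;> ring
      · rw [if_neg hcv, if_neg (fun hh => hcv ((hcompat j hj).mpr hh))]
        by_cases hcv1 : cavN (j+1) <;> [rw [if_pos hcv1]; rw [if_neg hcv1]] <;> push_cast <;> ring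

/-- Downward propagation: if `μ² + α2 μ + α1 ≠ 0` and every CAV block has vanishing
second component, the whole left eigenvector vanishes. -/
lemma prop_down (K : ℕ) (α1 α2 α3 : ℝ) (μ : ℂ)
    (hp : μ^2 + (α2:ℂ)*μ + (α1:ℂ) ≠ 0)
    (cavN : ℕ → Prop) [DecidablePred cavN]
    (W : ℕ → ℂ)
    (hW : ∀ i, 2*K ≤ i → W i = 0)
    (E0 : ∀ j < K, (if cavN j then 0 else (α1:ℂ)) * W (2*j+1) = μ * W (2*j))
    (E1 : ∀ j < K, -W (2*j) - (if cavN j then 0 else (α2:ℂ)) * W (2*j+1)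
        + W (2*j+2) + (if cavN (j+1) then 0 else (α3:ℂ)) * W (2*j+3) = μ * W (2*j+1))
    (hcavW : ∀ j, cavN j → W (2*j+1) = 0) :
    ∀ i, W i = 0 := by
  have key : ∀ m, ∀ j, K ≤ j + m → W (2*j) = 0 ∧ W (2*j+1) = 0 := by
    intro m
    induction m with
    | zero => intro j hjm; exact ⟨hW _ (by omega), hW _ (by omega)⟩
    | succ m ih =>
      intro j hjm
      by_cases hjK : K ≤ j + m
      · exact ih j hjK
      have hj : j < K := by omega
      have hn1 : W (2*j+2) = 0 := by
        have := (ih (j+1) (by omega)).1; rwa [show 2*(j+1) = 2*j+2 by omega] at this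
      have hn2 : W (2*j+3) = 0 := by
        have := (ih (j+1) (by omega)).2; rwa [show 2*(j+1)+1 = 2*j+3 by omega] at this
      have e0 := E0 j hj
      have e1 := E1 j hj
      rw [hn1, hn2] at e1
      by_cases hcv : cavN j
      · have hb := hcavW j hcv
        rw [if_pos hcv, hb] at e1
        exact ⟨by linear_combination -e1, hb⟩
      · rw [if_neg hcv] at e0 e1
        have ha : W (2*j) = -(μ + (α2:ℂ)) * W (2*j+1) := by linear_combination -e1
        have hb : (μ^2 + (α2:ℂ)*μ + (α1:ℂ)) * W (2*j+1) = 0 := by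
          rw [ha] at e0; linear_combination e0
        have hb0 : W (2*j+1) = 0 := by
          rcases mul_eq_zero.mp hb with h | h
          · exact absurd h hp
          · exact h
        exact ⟨by rw [ha, hb0, mul_zero], hb0⟩
  intro i
  by_cases hi : i < 2*K
  · rcases Nat.even_or_odd i with ⟨j, hj⟩ | ⟨j, hj⟩
    · have := (key K j (by omega)).1; rw [show 2*j = i by omega] at this; exact this
    · have := (key K j (by omega)).2; rw [show 2*j+1 = i by omega] at this; exact this
  · exact hW i (by omega)

/-- Upward propagation for the trailing subsystem (CAV at block 0):
needs `μ ≠ 0` and `α1 + α3 μ ≠ 0`. -/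
lemma prop_up (K : ℕ) (α1 α2 α3 : ℝ) (μ : ℂ)
    (hμ : μ ≠ 0) (hq : (α1:ℂ) + (α3:ℂ)*μ ≠ 0)
    (W : ℕ → ℂ)
    (hW : ∀ i, 2*K ≤ i → W i = 0)
    (E0 : ∀ j < K, (if j = 0 then 0 else (α1:ℂ)) * W (2*j+1) = μ * W (2*j))
    (E1 : ∀ j < K, -W (2*j) - (if j = 0 then 0 else (α2:ℂ)) * W (2*j+1)
        + W (2*j+2) + (if j+1 = 0 then 0 else (α3:ℂ)) * W (2*j+3) = μ * W (2*j+1))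
    (hb0 : W 1 = 0) :
    ∀ i, W i = 0 := by
  have key : ∀ j, j < K → W (2*j) = 0 ∧ W (2*j+1) = 0 := by
    intro j
    induction j with
    | zero =>
      intro h0
      refine ⟨?_, hb0⟩
      have e0 := E0 0 h0
      rw [if_pos rfl, zero_mul] at e0
      exact (mul_eq_zero.mp e0.symm).resolve_left hμ
    | succ j ih =>
      intro hj1
      have hj : j < K := by omega
      have hprev := ih hj
      have e1 := E1 j hj
      rw [hprev.1, hprev.2, if_neg (by omega : ¬ (j+1 = 0))] at e1
      -- e1 : -0 - C*0 + W(2j+2) + α3 W(2j+3) = μ * 0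
      have hsum : W (2*(j+1)) + (α3:ℂ) * W (2*(j+1)+1) = 0 := by
        rw [show 2*(j+1)+1 = 2*j+3 by omega, show 2*(j+1) = 2*j+2 by omega]
        linear_combination e1
      have e0 := E0 (j+1) hj1
      rw [if_neg (by omega : ¬ (j+1 = 0))] at e0
      have ha : W (2*(j+1)) = -(α3:ℂ) * W (2*(j+1)+1) := by linear_combination hsum
      have hb : ((α1:ℂ) + (α3:ℂ)*μ) * W (2*(j+1)+1) = 0 := by
        rw [ha] at e0; linear_combination e0
      have hb0' : W (2*(j+1)+1) = 0 := (mul_eq_zero.mp hb).resolve_left hq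
      exact ⟨by rw [ha, hb0', mul_zero], hb0'⟩
  intro i
  by_cases hi : i < 2*K
  · rcases Nat.even_or_odd i with ⟨j, hj⟩ | ⟨j, hj⟩
    · have := (key j (by omega)).1; rw [show 2*j = i by omega] at this; exact this
    · have := (key j (by omega)).2; rw [show 2*j+1 = i by omega] at this; exact this
  · exact hW i (by omega)

lemma submatrix_lead (n : ℕ) (α1 α2 α3 : ℝ) (cav : Fin n → Prop) [DecidablePred cav]
    (K : ℕ) (hK : K ≤ n)
    (f : Fin (2*K) → Fin (2*n)) (hf : ∀ r, (f r : ℕ) = (r : ℕ))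
    (hcav : ∀ j : Fin n, (j:ℕ) < K → ¬ cav j) :
    (trafficA n α1 α2 α3 cav).submatrix f f = trafficA K α1 α2 α3 (fun _ => False) := by
  ext r c
  have er := hf r
  have ec := hf c
  simp only [Matrix.submatrix_apply, trafficA, Matrix.of_apply]
  have hrm : ((⟨(f r : ℕ) % 2, by omega⟩ : Fin 2)) = (⟨(r:ℕ) % 2, by omega⟩ : Fin 2) := by
    apply Fin.ext; simp only []; omega
  have hcm : ((⟨(f c : ℕ) % 2, by omega⟩ : Fin 2)) = (⟨(c:ℕ) % 2, by omega⟩ : Fin 2) := by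
    apply Fin.ext; simp only []; omega
  by_cases h1 : (r:ℕ)/2 = (c:ℕ)/2
  · rw [if_pos (by omega : (f r:ℕ)/2 = (f c:ℕ)/2), if_pos h1, hrm, hcm,
      if_neg (hcav _ (by simp only []; omega)), if_neg not_false]
  · rw [if_neg (by omega : ¬ (f r:ℕ)/2 = (f c:ℕ)/2), if_neg h1]
    by_cases h2 : (r:ℕ)/2 = (c:ℕ)/2 + 1
    · rw [if_pos (by omega : (f r:ℕ)/2 = (f c:ℕ)/2 + 1), if_pos h2, hrm, hcm,
        if_neg (hcav _ (by simp only []; omega)), if_neg not_false]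
    · rw [if_neg (by omega : ¬ (f r:ℕ)/2 = (f c:ℕ)/2 + 1), if_neg h2]

set_option maxHeartbeats 2000000 in
lemma submatrix_trail (n : ℕ) (α1 α2 α3 : ℝ) (cav : Fin n → Prop) [DecidablePred cav]
    (i : ℕ) (hi : i < n)
    (f : Fin (2*(n-i)) → Fin (2*n)) (hf : ∀ r, (f r : ℕ) = 2*i + (r : ℕ))
    (hcav : ∀ j : Fin n, i ≤ (j:ℕ) → (cav j ↔ (j:ℕ) = i)) :
    (trafficA n α1 α2 α3 cav).submatrix f f
      = trafficA (n-i) α1 α2 α3 (fun v => (v:ℕ) = 0) := by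
  ext r c
  have er := hf r
  have ec := hf c
  simp only [Matrix.submatrix_apply, trafficA, Matrix.of_apply]
  have hrm : ((⟨(f r : ℕ) % 2, by omega⟩ : Fin 2)) = (⟨(r:ℕ) % 2, by omega⟩ : Fin 2) := by
    apply Fin.ext; simp only []; omega
  have hcm : ((⟨(f c : ℕ) % 2, by omega⟩ : Fin 2)) = (⟨(c:ℕ) % 2, by omega⟩ : Fin 2) := by
    apply Fin.ext; simp only []; omega
  have hcaviff : cav ⟨(f r : ℕ)/2, by have := (f r).isLt; omega⟩ ↔ ((r:ℕ)/2 = 0) := by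
    rw [hcav _ (by simp only []; omega)]
    simp only []; omega
  by_cases h1 : (r:ℕ)/2 = (c:ℕ)/2
  · rw [if_pos (by omega : (f r:ℕ)/2 = (f c:ℕ)/2), if_pos h1, hrm, hcm]
    by_cases h3 : (r:ℕ)/2 = 0
    · rw [if_pos (hcaviff.mpr h3), if_pos (by simp only []; omega : ((⟨(r:ℕ)/2, by have := r.isLt; omega⟩ : Fin (n-i)) : ℕ) = 0)]
    · rw [if_neg (fun hh => h3 (hcaviff.mp hh)),
        if_neg (by simp only []; omega : ¬ ((⟨(r:ℕ)/2, by have := r.isLt; omega⟩ : Fin (n-i)) : ℕ) = 0)]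
  · rw [if_neg (by omega : ¬ (f r:ℕ)/2 = (f c:ℕ)/2), if_neg h1]
    by_cases h2 : (r:ℕ)/2 = (c:ℕ)/2 + 1
    · rw [if_pos (by omega : (f r:ℕ)/2 = (f c:ℕ)/2 + 1), if_pos h2, hrm, hcm]
      by_cases h3 : (r:ℕ)/2 = 0
      · rw [if_pos (hcaviff.mpr h3), if_pos (by simp only []; omega : ((⟨(r:ℕ)/2, by have := r.isLt; omega⟩ : Fin (n-i)) : ℕ) = 0)]
      · rw [if_neg (fun hh => h3 (hcaviff.mp hh)),
          if_neg (by simp only []; omega : ¬ ((⟨(r:ℕ)/2, by have := r.isLt; omega⟩ : Fin (n-i)) : ℕ) = 0)]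
    · rw [if_neg (by omega : ¬ (f r:ℕ)/2 = (f c:ℕ)/2 + 1), if_neg h2]




variable {F : Type*} [Field F]


lemma rank_eq_of_vecMul_injective {N : ℕ} {q : Type*} [Fintype q]
    (M : Matrix (Fin N) q F) (h : ∀ w : Fin N → F, w ᵥ* M = 0 → w = 0) :
    M.rank = N := by
  rw [← Matrix.rank_transpose]
  have hker : LinearMap.ker (Mᵀ.mulVecLin) = ⊥ := by
    rw [LinearMap.ker_eq_bot']
    intro w hw
    apply h
    rwa [Matrix.mulVecLin_apply, Matrix.mulVec_transpose] at hw
  have := LinearMap.finrank_range_add_finrank_ker (Mᵀ.mulVecLin)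
  rw [hker, finrank_bot] at this
  simpa [Matrix.rank, Module.finrank_fintype_fun_eq_card] using this

lemma rank_lt_of_zero_row {N : ℕ} {q : Type*} [Fintype q]
    (M : Matrix (Fin N) q F) (r0 : Fin N) (h : ∀ c, M r0 c = 0) :
    M.rank < N := by
  have hN : 0 < N := Fin.pos r0
  have hle : LinearMap.range M.mulVecLin ≤ LinearMap.ker (LinearMap.proj r0 : ((Fin N → F) →ₗ[F] F)) := by
    rintro v ⟨x, rfl⟩
    simp only [LinearMap.mem_ker, LinearMap.proj_apply, Matrix.mulVecLin_apply]
    simp [Matrix.mulVec, dotProduct, h]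
  have h2 : M.rank ≤ Module.finrank F (LinearMap.ker (LinearMap.proj r0 : ((Fin N → F) →ₗ[F] F))) :=
    Submodule.finrank_mono hle
  have h3 := LinearMap.finrank_range_add_finrank_ker (LinearMap.proj r0 : ((Fin N → F) →ₗ[F] F))
  have hsurj : LinearMap.range (LinearMap.proj r0 : ((Fin N → F) →ₗ[F] F)) = ⊤ := by
    rw [LinearMap.range_eq_top]
    intro y; exact ⟨fun _ => y, rfl⟩
  rw [hsurj] at h3
  simp [Module.finrank_fintype_fun_eq_card, finrank_top] at h3
  omega



lemma quadratic_root_re_neg {b c : ℝ} (hb : 0 < b) (hc : 0 < c) (μ : ℂ)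
    (hre : 0 ≤ μ.re) : μ ^ 2 + (b : ℂ) * μ + (c : ℂ) ≠ 0 := by
  intro h
  have h1 := congrArg Complex.re h
  have h2 := congrArg Complex.im h
  simp [pow_two, Complex.add_re, Complex.add_im, Complex.mul_re, Complex.mul_im] at h1 h2
  have hy : μ.im = 0 := by nlinarith
  nlinarith [sq_nonneg μ.re]



section Part1
variable {n : ℕ} {α1 α2 α3 : ℝ} {cav : Fin n → Prop} [DecidablePred cav]

lemma pow_mul_B_row_zero (m : ℕ) (ι : Fin m → Fin n) (i : ℕ)
    (hι : ∀ j, i ≤ (ι j : ℕ)) :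
    ∀ (k : ℕ) (r : Fin (2*n)) (j : Fin m), (r:ℕ) < 2*i →
      ((trafficA n α1 α2 α3 cav) ^ k * trafficB n m ι) r j = 0 := by
  intro k
  induction k with
  | zero =>
    intro r j hr
    rw [pow_zero, Matrix.one_mul]
    simp only [trafficB, Matrix.of_apply]
    rw [if_neg (by have := hι j; omega)]
  | succ k ih =>
    intro r j hr
    rw [pow_succ', Matrix.mul_assoc, Matrix.mul_apply]
    apply Finset.sum_eq_zero
    intro c _
    by_cases hc : (c:ℕ) < 2*i
    · rw [ih c j hc, mul_zero]
    · rw [trafficA_zero r c (by omega), zero_mul]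

lemma part1 (m : ℕ) (ι : Fin m → Fin n) (i : ℕ) (hi : 0 < i) (hn : 0 < n)
    (hι : ∀ j, i ≤ (ι j : ℕ)) :
    (ctrbMat (trafficA n α1 α2 α3 cav) (trafficB n m ι)).rank < 2 * n := by
  apply rank_lt_of_zero_row _ ⟨0, by omega⟩
  intro kj
  exact pow_mul_B_row_zero m ι i hι kj.1 _ kj.2 (by simp; omega)

end Part1

lemma vecMul_smul_right {N q : Type*} [Fintype N] (M : Matrix N q ℂ) (v : N → ℂ) (c : ℂ) :
    v ᵥ* (c • M) = c • (v ᵥ* M) := by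
  funext j; simp [Matrix.vecMul, dotProduct, Finset.mul_sum]
  congr 1; funext i; ring

lemma hautus_core (n : ℕ) (α1 α2 α3 : ℝ) (hα1 : 0 < α1) (hα2 : 0 < α2)
    (i1 : Fin n) (cav : Fin n → Prop) [DecidablePred cav]
    (hcav : ∀ (j : ℕ) (h : j < n), (j = (i1:ℕ)) ↔ cav ⟨j,h⟩)
    (lam : ℂ) (hre : 0 ≤ lam.re) (w : Fin (2*n) → ℂ)
    (h1 : w ᵥ* ((trafficA n α1 α2 α3 cav).map Complex.ofReal) = lam • w)
    (h2 : w ⟨2*(i1:ℕ)+1, by have := i1.isLt; omega⟩ = 0) : w = 0 := by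
  obtain ⟨E0, E1⟩ := traffic_eqs n α1 α2 α3 cav (fun j => j = (i1:ℕ)) hcav lam w h1
  have hall := prop_down n α1 α2 α3 lam (quadratic_root_re_neg hα2 hα1 lam hre)
    (fun j => j = (i1:ℕ)) (extW n w) (extW_zero n w) E0 E1 ?_
  · funext r
    have h := hall (r : ℕ)
    rw [extW_apply n w (r:ℕ) r.isLt] at h
    exact h
  · intro j hj
    subst hj
    rw [extW_apply n w _ (by have := i1.isLt; omega)]
    exact h2

lemma no_spectrum_nonneg (K : ℕ) (α1 α2 α3 : ℝ) (hα1 : 0 < α1) (hα2 : 0 < α2)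
    (μ : ℂ) (hre : 0 ≤ μ.re) :
    μ ∉ spectrum ℂ ((trafficA K α1 α2 α3 (fun _ => False)).map Complex.ofReal) := by
  intro hmem
  rw [spectrum.mem_iff] at hmem
  apply hmem
  rw [Matrix.isUnit_iff_isUnit_det, isUnit_iff_ne_zero]
  intro hdet
  obtain ⟨v, hv0, hvm⟩ := Matrix.exists_vecMul_eq_zero_iff.mpr hdet
  have h1 : v ᵥ* ((trafficA K α1 α2 α3 (fun _ => False)).map Complex.ofReal) = μ • v := by
    rw [Algebra.algebraMap_eq_smul_one] at hvm
    rw [Matrix.vecMul_sub, vecMul_smul_right, Matrix.vecMul_one, sub_eq_zero] at hvm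
    exact hvm.symm
  obtain ⟨E0, E1⟩ := traffic_eqs K α1 α2 α3 (fun _ => False) (fun _ => False)
    (fun j h => Iff.rfl) μ v h1
  have hall := prop_down K α1 α2 α3 μ (quadratic_root_re_neg hα2 hα1 μ hre)
    (fun _ => False) (extW K v) (extW_zero K v) E0 E1 (fun j hj => hj.elim)
  apply hv0
  funext r
  have h := hall (r : ℕ)
  rw [extW_apply K v (r:ℕ) r.isLt] at h
  exact h

lemma dot_pow_ofReal {N : ℕ} (M : Matrix (Fin N) (Fin N) ℝ) (v b : Fin N → ℝ) (k : ℕ) :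
    (fun i => ((v i : ℂ))) ⬝ᵥ (((M.map Complex.ofReal)^k) *ᵥ (fun i => ((b i : ℂ))))
      = ((v ⬝ᵥ ((M^k) *ᵥ b) : ℝ) : ℂ) := by
  have hpow : (M.map Complex.ofReal)^k = (M^k).map Complex.ofReal := by
    have h1 : M.map Complex.ofReal = Complex.ofRealHom.mapMatrix M := rfl
    rw [h1, ← map_pow]
    rfl
  rw [hpow]
  simp only [dotProduct, Matrix.mulVec, Matrix.map_apply]
  push_cast
  rfl

lemma sum_mulVec_helper {N : ℕ} {ι : Type*} (s : Finset ι) (f : ι → Matrix (Fin N) (Fin N) ℂ)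
    (b : Fin N → ℂ) : (∑ j ∈ s, f j) *ᵥ b = ∑ j ∈ s, (f j *ᵥ b) := by
  funext x
  simp only [Matrix.mulVec, dotProduct, Finset.sum_apply, Matrix.sum_apply,
    Finset.sum_mul]
  exact Finset.sum_comm

lemma dot_sum_helper {N : ℕ} {ι : Type*} (s : Finset ι) (v : Fin N → ℂ)
    (g : ι → Fin N → ℂ) : v ⬝ᵥ (∑ j ∈ s, g j) = ∑ j ∈ s, v ⬝ᵥ (g j) := by
  simp only [dotProduct, Finset.sum_apply, Finset.mul_sum]
  exact Finset.sum_comm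

lemma dot_pow_all {N : ℕ} (hN : 0 < N) (M : Matrix (Fin N) (Fin N) ℂ) (v b : Fin N → ℂ)
    (h : ∀ k < N, v ⬝ᵥ ((M^k) *ᵥ b) = 0) : ∀ k, v ⬝ᵥ ((M^k) *ᵥ b) = 0 := by
  have hcoef : M.charpoly.coeff N = 1 := by
    have := (Matrix.charpoly_monic M).coeff_natDegree
    rwa [Matrix.charpoly_natDegree_eq_dim, Fintype.card_fin] at this
  have hCH : (∑ j ∈ Finset.range (N+1), (M.charpoly.coeff j) • M^j) = 0 := by
    have h0 := Matrix.aeval_self_charpoly M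
    rw [Polynomial.aeval_eq_sum_range, Matrix.charpoly_natDegree_eq_dim, Fintype.card_fin] at h0
    exact h0
  intro k
  induction k using Nat.strong_induction_on with
  | _ k ih =>
    by_cases hk : k < N
    · exact h k hk
    · have hzero : (∑ j ∈ Finset.range (N+1), (M.charpoly.coeff j) • M^(k-N+j)) = 0 := by
        have heq : (∑ j ∈ Finset.range (N+1), (M.charpoly.coeff j) • M^(k-N+j))
            = M^(k-N) * ∑ j ∈ Finset.range (N+1), (M.charpoly.coeff j) • M^j := by
          rw [Finset.mul_sum]
          apply Finset.sum_congr rfl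
          intro j _
          rw [Matrix.mul_smul, ← pow_add]
        rw [heq, hCH, Matrix.mul_zero]
      have key : (0 : ℂ) = ∑ j ∈ Finset.range (N+1),
          (M.charpoly.coeff j) * (v ⬝ᵥ ((M^(k-N+j)) *ᵥ b)) := by
        calc (0:ℂ) = v ⬝ᵥ ((∑ j ∈ Finset.range (N+1), (M.charpoly.coeff j) • M^(k-N+j)) *ᵥ b) := by
              rw [hzero]; simp
        _ = ∑ j ∈ Finset.range (N+1), (M.charpoly.coeff j) * (v ⬝ᵥ ((M^(k-N+j)) *ᵥ b)) := by
              rw [sum_mulVec_helper, dot_sum_helper]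
              apply Finset.sum_congr rfl
              intro j _
              rw [Matrix.smul_mulVec, dotProduct_smul, smul_eq_mul]
      rw [Finset.sum_range_succ, hcoef] at key
      have hlast : k - N + N = k := by omega
      rw [hlast, one_mul] at key
      have hrest : ∀ j ∈ Finset.range N, (M.charpoly.coeff j) * (v ⬝ᵥ ((M^(k-N+j)) *ᵥ b)) = 0 := by
        intro j hj
        rw [Finset.mem_range] at hj
        rw [ih (k-N+j) (by omega), mul_zero]
      rw [Finset.sum_eq_zero hrest, zero_add] at key
      exact key.symm

lemma trail_core (K : ℕ) (hK : 0 < K) (α1 α2 α3 : ℝ) (hα1 : 0 < α1) (hα2 : 0 < α2)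
    (hα3 : 0 < α3) (hcond : α1 - α2 * α3 + α3 ^ 2 ≠ 0)
    (w : Fin (2*K) → ℝ)
    (hw : ∀ k : ℕ, k < 2*K →
      w ⬝ᵥ (((trafficA K α1 α2 α3 (fun v => (v:ℕ) = 0))^k)
        *ᵥ (fun r => if (r:ℕ) = 1 then 1 else 0)) = 0) :
    w = 0 := by
  by_contra hw0
  set M : Matrix (Fin (2*K)) (Fin (2*K)) ℝ := trafficA K α1 α2 α3 (fun v => (v:ℕ) = 0) with hM
  set Mc : Matrix (Fin (2*K)) (Fin (2*K)) ℂ := M.map Complex.ofReal with hMc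
  set bR : Fin (2*K) → ℝ := fun r => if (r:ℕ) = 1 then 1 else 0 with hbR
  set bc : Fin (2*K) → ℂ := fun r => if (r:ℕ) = 1 then 1 else 0 with hbc
  have hbcast : (fun i => ((bR i : ℂ))) = bc := by
    funext i; simp only [hbR, hbc]; split_ifs <;> simp
  set wc : Fin (2*K) → ℂ := fun i => ((w i : ℂ)) with hwc
  have hwc0 : wc ≠ 0 := by
    intro hz
    apply hw0
    funext i
    have := congrFun hz i
    simpa [hwc] using this
  have hlow : ∀ k < 2*K, wc ⬝ᵥ ((Mc^k) *ᵥ bc) = 0 := by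
    intro k hk
    rw [hwc, ← hbcast, dot_pow_ofReal]
    rw [hw k hk]
    simp
  have hall := dot_pow_all (by omega) Mc wc bc hlow
  -- the invariant subspace
  set U : Submodule ℂ (Fin (2*K) → ℂ) :=
    { carrier := {v | ∀ k, v ⬝ᵥ ((Mc^k) *ᵥ bc) = 0}
      add_mem' := by
        intro a b ha hb k
        rw [add_dotProduct, ha k, hb k, add_zero]
      zero_mem' := by
        intro k
        rw [zero_dotProduct]
      smul_mem' := by
        intro c a ha k
        rw [smul_dotProduct, ha k, smul_zero] } with hU
  have hinv : ∀ v ∈ U, (Mcᵀ).mulVecLin v ∈ U := by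
    intro v hv k
    simp only [Matrix.mulVecLin_apply]
    rw [Matrix.mulVec_transpose]
    have heq : (v ᵥ* Mc) ⬝ᵥ ((Mc^k) *ᵥ bc) = v ⬝ᵥ ((Mc^(k+1)) *ᵥ bc) := by
      rw [← Matrix.dotProduct_mulVec, Matrix.mulVec_mulVec, ← pow_succ']
    rw [heq]
    exact hv (k+1)
  have hwcU : wc ∈ U := hall
  haveI : Nontrivial U := nontrivial_of_ne ⟨wc, hwcU⟩ 0 (by
    intro hz
    exact hwc0 (by simpa [Subtype.ext_iff] using hz))
  set g : U →ₗ[ℂ] U := ((Mcᵀ).mulVecLin).restrict hinv with hg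
  obtain ⟨μ, hμ⟩ := Module.End.exists_eigenvalue g
  obtain ⟨v0, hv0⟩ := hμ.exists_hasEigenvector
  have hv0mem : (v0 : Fin (2*K) → ℂ) ∈ U := v0.2
  have hv0ne : (v0 : Fin (2*K) → ℂ) ≠ 0 := by
    intro hz
    exact hv0.2 (Subtype.ext hz)
  have heig : (v0 : Fin (2*K) → ℂ) ᵥ* Mc = μ • (v0 : Fin (2*K) → ℂ) := by
    have h1 := hv0.1
    rw [Module.End.mem_eigenspace_iff] at h1
    have h2 : ((g v0 : U) : Fin (2*K) → ℂ) = ((μ • v0 : U) : Fin (2*K) → ℂ) := by rw [h1]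
    rw [hg] at h2
    rw [LinearMap.restrict_apply] at h2
    simp only [Matrix.mulVecLin_apply, Submodule.coe_smul] at h2
    rwa [Matrix.mulVec_transpose] at h2
  -- second coordinate of v0 vanishes
  have hb1 : (v0 : Fin (2*K) → ℂ) ⟨1, by omega⟩ = 0 := by
    have h0 := hv0mem 0
    rw [pow_zero, Matrix.one_mulVec] at h0
    rw [dotProduct] at h0
    rw [Finset.sum_eq_single_of_mem (⟨1, by omega⟩ : Fin (2*K)) (Finset.mem_univ _)] at h0
    · rw [hbc] at h0
      simpa using h0
    · intro x _ hx
      have : ¬ ((x:ℕ) = 1) := fun hh => hx (Fin.ext hh)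
      rw [hbc]
      simp only [this, if_false, mul_zero]
  -- extract the block equations
  obtain ⟨E0, E1⟩ := traffic_eqs K α1 α2 α3 (fun v => (v:ℕ) = 0) (fun j => j = 0)
    (fun j h => by simp) μ (v0 : Fin (2*K) → ℂ) heig
  have hWb1 : extW K (v0 : Fin (2*K) → ℂ) 1 = 0 := by
    rw [extW_apply K _ 1 (by omega)]
    exact hb1
  have hvanish : ∀ i, extW K (v0 : Fin (2*K) → ℂ) i = 0 := by
    by_cases hp : μ^2 + (α2:ℂ)*μ + (α1:ℂ) = 0
    · -- eigenvalue of the HDV block: upward propagation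
      have hμ0 : μ ≠ 0 := by
        intro hz
        rw [hz] at hp
        simp only [ne_eq, zero_pow, mul_zero, add_zero, zero_add] at hp
        norm_num at hp
        exact absurd hp (by exact_mod_cast hα1.ne')
      have hq : (α1:ℂ) + (α3:ℂ)*μ ≠ 0 := by
        intro hq0
        have hzero : ((α1 * (α1 - α2*α3 + α3^2) : ℝ) : ℂ) = 0 := by
          push_cast
          linear_combination (α3:ℂ)^2 * hp - ((α3:ℂ)*μ - (α1:ℂ))*hq0 - (α2:ℂ)*(α3:ℂ)*hq0
        have : α1 * (α1 - α2*α3 + α3^2) = 0 := by exact_mod_cast hzero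
        exact (mul_ne_zero hα1.ne' hcond) this
      exact prop_up K α1 α2 α3 μ hμ0 hq (extW K _) (extW_zero K _) E0 E1 hWb1
    · exact prop_down K α1 α2 α3 μ hp (fun j => j = 0) (extW K _) (extW_zero K _) E0 E1
        (fun j hj => by rw [hj]; exact hWb1)
  apply hv0ne
  funext r
  have h := hvanish (r : ℕ)
  rw [extW_apply K _ (r:ℕ) r.isLt] at h
  exact h


/-- Single-CAV case `S = {i₁}` with `1 < i₁ ≤ n`: here `i1 : Fin n`
is the 0-indexed CAV position (so the 1-indexed index is `i₁ = i1 + 1` and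
`1 < i₁` means `0 < (i1 : ℕ)`).  If `α₁ > 0`, `α₂ > α₃ > 0` and
`α₁ - α₂α₃ + α₃² ≠ 0`, then `(A, B)` is not controllable but is stabilizable;
moreover the leading principal submatrix of `A` of size `2(i₁-1)` is Hurwitz
and the trailing subsystem `(A', B')` on rows/columns `2i₁-1, …, 2n` is
controllable. -/
theorem mixed_traffic_single_CAV_middle
    (n : ℕ) (hn : 0 < n) (α1 α2 α3 : ℝ) (i1 : Fin n) (hfirst : 0 < (i1 : ℕ))
    (hα1 : 0 < α1) (hα23 : α3 < α2) (hα3 : 0 < α3)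
    (hcond : α1 - α2 * α3 + α3 ^ 2 ≠ 0) :
    (ctrbMat (trafficA n α1 α2 α3 (fun v => ∃ _j : Fin 1, i1 = v))
        (trafficB n 1 (fun _ => i1))).rank < 2 * n ∧
    (∀ lam : ℂ, 0 ≤ lam.re →
      (Matrix.fromCols
        ((trafficA n α1 α2 α3 (fun v => ∃ _j : Fin 1, i1 = v)).map Complex.ofReal
            - lam • 1)
        ((trafficB n 1 (fun _ => i1)).map Complex.ofReal)).rank = 2 * n) ∧
    (∀ μ ∈ spectrum ℂ
      (((trafficA n α1 α2 α3 (fun v => ∃ _j : Fin 1, i1 = v)).submatrix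
          (Fin.castLE (mul_le_mul_right i1.isLt.le 2))
          (Fin.castLE (mul_le_mul_right i1.isLt.le 2) :
            Fin (2 * (i1 : ℕ)) → Fin (2 * n))).map Complex.ofReal),
      μ.re < 0) ∧
    (ctrbMat
      ((trafficA n α1 α2 α3 (fun v => ∃ _j : Fin 1, i1 = v)).submatrix
        (fun r : Fin (2 * (n - (i1 : ℕ))) =>
          (⟨2 * (i1 : ℕ) + (r : ℕ), by have := r.isLt; have := i1.isLt; omega⟩ :
            Fin (2 * n)))
        (fun c : Fin (2 * (n - (i1 : ℕ))) =>
          (⟨2 * (i1 : ℕ) + (c : ℕ), by have := c.isLt; have := i1.isLt; omega⟩ :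
            Fin (2 * n))))
      ((trafficB n 1 (fun _ => i1)).submatrix
        (fun r : Fin (2 * (n - (i1 : ℕ))) =>
          (⟨2 * (i1 : ℕ) + (r : ℕ), by have := r.isLt; have := i1.isLt; omega⟩ :
            Fin (2 * n)))
        id)).rank = 2 * (n - (i1 : ℕ)) := by
  have hα2 : 0 < α2 := lt_trans hα3 hα23
  refine ⟨?_, ?_, ?_, ?_⟩
  · -- Part 1: not controllable
    exact part1 1 (fun _ => i1) (i1:ℕ) hfirst hn (fun j => le_refl _)
  · -- Part 2: stabilizable
    intro lam hre
    apply rank_eq_of_vecMul_injective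
    intro w hw
    have h1 : w ᵥ* ((trafficA n α1 α2 α3 (fun v => ∃ _j : Fin 1, i1 = v)).map Complex.ofReal
        - lam • 1) = 0 := by
      funext c; exact congrFun hw (Sum.inl c)
    rw [Matrix.vecMul_sub, vecMul_smul_right, Matrix.vecMul_one, sub_eq_zero] at h1
    have h2 : w ⟨2*(i1:ℕ)+1, by have := i1.isLt; omega⟩ = 0 := by
      have h0 : (w ᵥ* ((trafficB n 1 (fun _ => i1)).map Complex.ofReal)) 0 = 0 :=
        congrFun hw (Sum.inr 0)
      simp only [Matrix.vecMul, dotProduct, Matrix.map_apply, trafficB,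
        Matrix.of_apply] at h0
      rw [Finset.sum_eq_single_of_mem (⟨2*(i1:ℕ)+1, by have := i1.isLt; omega⟩ : Fin (2*n))
        (Finset.mem_univ _)] at h0
      · rw [if_pos (by simp)] at h0
        simpa using h0
      · intro x _ hx
        rw [if_neg (by intro hh; exact hx (Fin.ext (by simpa using hh)))]
        simp
    exact hautus_core n α1 α2 α3 hα1 hα2 i1 _
      (fun j h => ⟨fun hj => ⟨0, Fin.ext hj.symm⟩, fun ⟨_, hh⟩ => (Fin.ext_iff.mp hh).symm⟩)
      lam hre w h1 h2
  · -- Part 3: leading subsystem Hurwitz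
    intro μ hμmem
    by_contra hlt
    push_neg at hlt
    have hsub := submatrix_lead n α1 α2 α3 (fun v => ∃ _j : Fin 1, i1 = v) (i1:ℕ)
      i1.isLt.le (Fin.castLE (mul_le_mul_right i1.isLt.le 2)) (fun r => rfl)
      (fun j hj => by rintro ⟨_, hh⟩; rw [hh] at hj; omega)
    rw [hsub] at hμmem
    exact no_spectrum_nonneg (i1:ℕ) α1 α2 α3 hα1 hα2 μ hlt hμmem
  · -- Part 4: trailing subsystem controllable
    have hKpos : 0 < n - (i1:ℕ) := by have := i1.isLt; omega
    have hA' := submatrix_trail n α1 α2 α3 (fun v => ∃ _j : Fin 1, i1 = v) (i1:ℕ) i1.isLt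
      (fun r : Fin (2 * (n - (i1 : ℕ))) =>
          (⟨2 * (i1 : ℕ) + (r : ℕ), by have := r.isLt; have := i1.isLt; omega⟩ : Fin (2 * n)))
      (fun r => rfl)
      (fun j _ => ⟨fun ⟨_, hh⟩ => (Fin.ext_iff.mp hh).symm, fun hj => ⟨0, Fin.ext hj.symm⟩⟩)
    have hB' : (trafficB n 1 (fun _ => i1)).submatrix
        (fun r : Fin (2 * (n - (i1 : ℕ))) =>
          (⟨2 * (i1 : ℕ) + (r : ℕ), by have := r.isLt; have := i1.isLt; omega⟩ : Fin (2 * n)))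
        id = Matrix.of fun (r : Fin (2 * (n - (i1 : ℕ)))) (_ : Fin 1) => if (r:ℕ) = 1 then (1:ℝ) else 0 := by
      ext r j
      simp only [Matrix.submatrix_apply, trafficB, Matrix.of_apply]
      by_cases h : (r:ℕ) = 1
      · rw [if_pos (by simp; omega), if_pos h]
      · rw [if_neg (by simp; omega), if_neg h]
    rw [hA', hB']
    apply rank_eq_of_vecMul_injective
    intro w hw
    apply trail_core (n - (i1:ℕ)) hKpos α1 α2 α3 hα1 hα2 hα3 hcond
    intro k hk
    have h0 := congrFun hw (⟨k, hk⟩, 0)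
    have hgoal : w ⬝ᵥ (((trafficA (n - (i1:ℕ)) α1 α2 α3 (fun v => (v:ℕ) = 0))^k)
          *ᵥ (fun r => if (r:ℕ) = 1 then 1 else 0))
        = (w ᵥ* ctrbMat (trafficA (n - (i1:ℕ)) α1 α2 α3 (fun v => (v:ℕ) = 0))
            (Matrix.of fun (r : Fin (2 * (n - (i1:ℕ)))) (_ : Fin 1) =>
              if (r:ℕ) = 1 then (1:ℝ) else 0)) (⟨k, hk⟩, 0) := by
      rfl
    rw [hgoal]
    exact h0
end
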